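/- arXiv:1909.04187 — 3 statements merged into one kernel-verified Lean document; each statement's English description precedes it below -/
import Mathlib

section
/- Let (K, η) be a quasi-biangular G-algebra with central element z ∈ K_e and inner product elements {Σ_i p_i^g ⊗ q_i^g}_{g∈G}. Then the element Σ_i p_i^e ⊗ z q_i^e ∈ K_e ⊗ K_e^{op} is a separability idempotent for the principal component K_e; that is, Σ_i p_i^e (z q_i^e) = 1 and for every b ∈ K_e one has Σ_i b p_i^e ⊗ z q_i^e = Σ_i p_i^e ⊗ z q_i^e b. -/
open scoped TensorProduct

/-- A Frobenius `G`-algebra over a commutative ring `k`: a `G`-graded associative unital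
`k`-algebra `K = ⊕_{g∈G} K_g` together with a symmetric bilinear form `η` satisfying
`η(ab,c) = η(a,bc)`, nondegenerate on `K_g ⊗ K_{g⁻¹}` and zero on other pairs of components,
with finite inner product elements `Σ_i p_i^g ⊗ q_i^g` characterized by
`a = Σ_i η(a, q_i^g) • p_i^g` for all `a ∈ K_g`. -/
structure FrobeniusGAlgebraData (k G K : Type*) [CommRing k] [Group G] [DecidableEq G]
    [Ring K] [Algebra k K] where
  Kg : G → Submodule k K
  internal : DirectSum.IsInternal Kg
  one_mem : (1 : K) ∈ Kg 1
  mul_mem : ∀ {g h : G} {a b : K}, a ∈ Kg g → b ∈ Kg h → a * b ∈ Kg (g * h)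
  form : K →ₗ[k] K →ₗ[k] k
  form_symm : ∀ a b : K, form a b = form b a
  form_frob : ∀ a b c : K, form (a * b) c = form a (b * c)
  form_orth : ∀ {g h : G} {a b : K}, a ∈ Kg g → b ∈ Kg h → g * h ≠ 1 → form a b = 0
  form_nondeg : ∀ (g : G) (a : K), a ∈ Kg g → (∀ b ∈ Kg g⁻¹, form a b = 0) → a = 0
  n : G → ℕ
  p : ∀ g : G, Fin (n g) → K
  q : ∀ g : G, Fin (n g) → K
  p_mem : ∀ g i, p g i ∈ Kg g
  q_mem : ∀ g i, q g i ∈ Kg g⁻¹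
  char : ∀ (g : G), ∀ a ∈ Kg g, a = ∑ i, form a (q g i) • p g i

variable {k G K : Type*} [CommRing k] [Group G] [DecidableEq G] [Ring K] [Algebra k K]

/-- Dual characterization: for `a ∈ K_{g⁻¹}`, `a = Σ_i η(p_i^g, a) • q_i^g`. -/
lemma FrobeniusGAlgebraData.dual_char (F : FrobeniusGAlgebraData k G K) (g : G) (a : K)
    (ha : a ∈ F.Kg g⁻¹) : a = ∑ i, F.form (F.p g i) a • F.q g i := by
  have hmem : a - ∑ i, F.form (F.p g i) a • F.q g i ∈ F.Kg g⁻¹ :=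
    Submodule.sub_mem _ ha
      (Submodule.sum_mem _ fun i _ => Submodule.smul_mem _ _ (F.q_mem g i))
  have h := F.form_nondeg g⁻¹ _ hmem ?_
  · exact sub_eq_zero.mp h
  · intro b hb
    rw [inv_inv] at hb
    have hb' := F.char g b hb
    have : F.form a b = ∑ i, F.form (F.p g i) a * F.form (F.q g i) b := by
      conv_lhs => rw [F.form_symm a b, hb']
      simp only [map_sum, LinearMap.sum_apply, LinearMap.map_smul, LinearMap.smul_apply,
        smul_eq_mul]
      refine Finset.sum_congr rfl fun i _ => ?_
      rw [F.form_symm b (F.q g i), F.form_symm (F.p g i) a]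
      ring
    simp only [map_sub, map_sum, LinearMap.map_smul, LinearMap.sub_apply, LinearMap.sum_apply,
      LinearMap.smul_apply, smul_eq_mul, this]
    ring

/-- Casimir identity for the principal component. -/
lemma FrobeniusGAlgebraData.casimir (F : FrobeniusGAlgebraData k G K) (b : K)
    (hb : b ∈ F.Kg 1) :
    ∑ i, (b * F.p 1 i) ⊗ₜ[k] (F.q 1 i) = ∑ i, (F.p 1 i) ⊗ₜ[k] (F.q 1 i * b) := by
  have hbp : ∀ i, b * F.p 1 i ∈ F.Kg 1 := fun i => by
    have := F.mul_mem hb (F.p_mem 1 i); rwa [one_mul] at this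
  have hqb : ∀ j, F.q 1 j * b ∈ F.Kg (1 : G)⁻¹ := fun j => by
    have := F.mul_mem (F.q_mem 1 j) hb; rwa [mul_one] at this
  have key : ∀ i j, F.form (b * F.p 1 i) (F.q 1 j) = F.form (F.p 1 i) (F.q 1 j * b) := by
    intro i j
    rw [F.form_symm, ← F.form_frob, F.form_symm]
  calc ∑ i, (b * F.p 1 i) ⊗ₜ[k] (F.q 1 i)
      = ∑ i, (∑ j, F.form (b * F.p 1 i) (F.q 1 j) • F.p 1 j) ⊗ₜ[k] (F.q 1 i) := by
        refine Finset.sum_congr rfl fun i _ => ?_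
        rw [← F.char 1 _ (hbp i)]
    _ = ∑ i, ∑ j, F.form (b * F.p 1 i) (F.q 1 j) • (F.p 1 j ⊗ₜ[k] F.q 1 i) := by
        simp [TensorProduct.sum_tmul, TensorProduct.smul_tmul']
    _ = ∑ j, ∑ i, F.form (F.p 1 i) (F.q 1 j * b) • (F.p 1 j ⊗ₜ[k] F.q 1 i) := by
        rw [Finset.sum_comm]
        exact Finset.sum_congr rfl fun i _ => Finset.sum_congr rfl fun j _ => by rw [key]
    _ = ∑ j, (F.p 1 j) ⊗ₜ[k] (∑ i, F.form (F.p 1 i) (F.q 1 j * b) • F.q 1 i) := by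
        simp [TensorProduct.tmul_sum, TensorProduct.tmul_smul]
    _ = ∑ j, (F.p 1 j) ⊗ₜ[k] (F.q 1 j * b) := by
        refine Finset.sum_congr rfl fun j _ => ?_
        rw [← F.dual_char 1 _ (hqb j)]

/-- The projection `Ψ(a) = Σ_i p_i^e a q_i^e`. -/
def FrobeniusGAlgebraData.Psi (F : FrobeniusGAlgebraData k G K) (a : K) : K :=
  ∑ i, F.p 1 i * a * F.q 1 i

/-- The map `φ_g(a) = Σ_i p_i^g a z q_i^g`. -/
def FrobeniusGAlgebraData.phi (F : FrobeniusGAlgebraData k G K) (z : K) (g : G) (a : K) : K :=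
  ∑ i, F.p g i * a * z * F.q g i

/-- For a quasi-biangular `G`-algebra `(K,η)` with central element `z`, the element
`Σ_i p_i^e ⊗ z q_i^e` is a separability idempotent of the principal component `K_e`. -/
theorem quasiBiangular_separability_idempotent
    (F : FrobeniusGAlgebraData k G K)
    (z : K) (hz : z ∈ F.Kg 1)
    (hzcentral : ∀ a ∈ F.Kg 1, z * a = a * z)
    (hbiang : ∀ g : G, ∑ i, F.p g i * z * F.q g i = 1)
    (hstrong : ∀ g h : G, F.Kg g * F.Kg h = F.Kg (g * h)) :
    (∑ i, F.p 1 i * (z * F.q 1 i)) = 1 ∧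
    ∀ b ∈ F.Kg 1,
      ∑ i, (b * F.p 1 i) ⊗ₜ[k] (z * F.q 1 i)
        = ∑ i, F.p 1 i ⊗ₜ[k] (z * F.q 1 i * b) := by
  constructor
  · rw [← hbiang 1]
    exact Finset.sum_congr rfl fun i _ => by rw [mul_assoc]
  · intro b hb
    have hcas := F.casimir b hb
    have := congrArg (LinearMap.lTensor K (LinearMap.mulLeft k z)) hcas
    simp only [map_sum, LinearMap.lTensor_tmul, LinearMap.mulLeft_apply] at this
    convert this using 2 with i _ i _
    rw [mul_assoc]
end

section
/- Let (K, η) be a quasi-biangular G-algebra with central element z. For each g ∈ G let φ_g(a) = Σ_i p_i^g a z q_i^g. Then φ_h acts as the identity on Ψ(K_h) for every h ∈ G, i.e. φ_h(Ψ(c)) = Ψ(c) for all c ∈ K_h, where Ψ(a) = Σ_i p_i^e a q_i^e. -/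
open scoped TensorProduct

variable {k G K : Type*} [CommRing k] [Group G] [DecidableEq G] [Ring K] [Algebra k K]

namespace FrobeniusGAlgebraData

variable (F : FrobeniusGAlgebraData k G K)

/-- The general map `Ψ_g(a) = Σ_i p_i^g a q_i^g`. -/
def PsiG (g : G) (a : K) : K := ∑ i, F.p g i * a * F.q g i

lemma psi_eq_psiG (a : K) : F.Psi a = F.PsiG 1 a := rfl

/-- Dual characterization: `b = Σ_i η(p_i^g, b) • q_i^g` for `b ∈ K_{g⁻¹}`. -/
lemma char' (g : G) (b : K) (hb : b ∈ F.Kg g⁻¹) :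
    b = ∑ i, F.form (F.p g i) b • F.q g i := by
  set S := ∑ i, F.form (F.p g i) b • F.q g i with hS
  have hSmem : S ∈ F.Kg g⁻¹ :=
    Submodule.sum_mem _ fun i _ => Submodule.smul_mem _ _ (F.q_mem g i)
  have hdiff : b - S ∈ F.Kg g⁻¹ := Submodule.sub_mem _ hb hSmem
  have hzero : ∀ a ∈ F.Kg g⁻¹⁻¹, F.form (b - S) a = 0 := by
    intro a ha
    rw [inv_inv] at ha
    have hSa : F.form S a = F.form b a := by
      have h1 : F.form S a = ∑ i, F.form (F.p g i) b * F.form (F.q g i) a := by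
        rw [hS, map_sum]
        simp [LinearMap.sum_apply, LinearMap.smul_apply, smul_eq_mul]
      have ha' := F.char g a ha
      have h2 : F.form a b = ∑ i, F.form a (F.q g i) * F.form (F.p g i) b := by
        have := congrArg (fun u => F.form u b) ha'
        simp only [map_sum, map_smul, LinearMap.sum_apply, LinearMap.smul_apply,
          smul_eq_mul] at this
        exact this
      rw [h1, F.form_symm b a, h2]
      apply Finset.sum_congr rfl
      intro i _
      rw [F.form_symm (F.q g i) a, mul_comm]
    rw [map_sub, LinearMap.sub_apply, hSa, sub_self]
  exact sub_eq_zero.mp (F.form_nondeg g⁻¹ (b - S) hdiff hzero)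

/-- Cyclicity: `Ψ_g(x y) = Ψ_{g t}(y x)` for `x ∈ K_t`. -/
lemma psiG_cyclic (g t : G) (x y : K) (hx : x ∈ F.Kg t) :
    F.PsiG g (x * y) = F.PsiG (g * t) (y * x) := by
  unfold PsiG
  have key : ∀ i, F.p g i * (x * y) * F.q g i
      = ∑ j, F.form (F.p g i * x) (F.q (g * t) j) • (F.p (g * t) j * y * F.q g i) := by
    intro i
    have hmem : F.p g i * x ∈ F.Kg (g * t) := F.mul_mem (F.p_mem g i) hx
    have hc := F.char (g * t) _ hmem
    calc F.p g i * (x * y) * F.q g i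
        = (F.p g i * x) * y * F.q g i := by simp [mul_assoc]
      _ = (∑ j, F.form (F.p g i * x) (F.q (g * t) j) • F.p (g * t) j) * y * F.q g i := by
          rw [← hc]
      _ = ∑ j, F.form (F.p g i * x) (F.q (g * t) j) • (F.p (g * t) j * y * F.q g i) := by
          rw [Finset.sum_mul, Finset.sum_mul]
          exact Finset.sum_congr rfl fun j _ => by rw [smul_mul_assoc, smul_mul_assoc]
  rw [Finset.sum_congr rfl fun i _ => key i, Finset.sum_comm]
  apply Finset.sum_congr rfl
  intro j _
  have hxq : x * F.q (g * t) j ∈ F.Kg g⁻¹ := by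
    have := F.mul_mem hx (F.q_mem (g * t) j)
    have he : t * (g * t)⁻¹ = g⁻¹ := by group
    rwa [he] at this
  have hc' := F.char' g (x * F.q (g * t) j) hxq
  calc ∑ i, F.form (F.p g i * x) (F.q (g * t) j) • (F.p (g * t) j * y * F.q g i)
      = F.p (g * t) j * y * ∑ i, F.form (F.p g i) (x * F.q (g * t) j) • F.q g i := by
        rw [Finset.mul_sum]
        exact Finset.sum_congr rfl fun i _ => by
          rw [F.form_frob, mul_smul_comm]
    _ = F.p (g * t) j * y * (x * F.q (g * t) j) := by rw [← hc']
    _ = F.p (g * t) j * (y * x) * F.q (g * t) j := by simp [mul_assoc]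

/-- Twisted centrality: `x Ψ_g(a) = Ψ_{t g}(a) x` for `x ∈ K_t`. -/
lemma psiG_swap (g t : G) (x a : K) (hx : x ∈ F.Kg t) :
    x * F.PsiG g a = F.PsiG (t * g) a * x := by
  unfold PsiG
  have key : ∀ i, x * (F.p g i * a * F.q g i)
      = ∑ j, F.form (F.p g i) (F.q (t * g) j * x) • (F.p (t * g) j * a * F.q g i) := by
    intro i
    have hmem : x * F.p g i ∈ F.Kg (t * g) := F.mul_mem hx (F.p_mem g i)
    have hc := F.char (t * g) _ hmem
    calc x * (F.p g i * a * F.q g i)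
        = (x * F.p g i) * a * F.q g i := by simp [mul_assoc]
      _ = (∑ j, F.form (x * F.p g i) (F.q (t * g) j) • F.p (t * g) j) * a * F.q g i := by
          rw [← hc]
      _ = ∑ j, F.form (F.p g i) (F.q (t * g) j * x) • (F.p (t * g) j * a * F.q g i) := by
          rw [Finset.sum_mul, Finset.sum_mul]
          refine Finset.sum_congr rfl fun j _ => ?_
          rw [smul_mul_assoc, smul_mul_assoc]
          congr 1
          rw [F.form_frob, F.form_symm, F.form_frob]
  rw [Finset.mul_sum, Finset.sum_congr rfl fun i _ => key i, Finset.sum_comm]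
  rw [Finset.sum_mul]
  apply Finset.sum_congr rfl
  intro j _
  have hqx : F.q (t * g) j * x ∈ F.Kg g⁻¹ := by
    have := F.mul_mem (F.q_mem (t * g) j) hx
    have he : (t * g)⁻¹ * t = g⁻¹ := by group
    rwa [he] at this
  have hc' := F.char' g (F.q (t * g) j * x) hqx
  calc ∑ i, F.form (F.p g i) (F.q (t * g) j * x) • (F.p (t * g) j * a * F.q g i)
      = F.p (t * g) j * a * ∑ i, F.form (F.p g i) (F.q (t * g) j * x) • F.q g i := by
        rw [Finset.mul_sum]
        exact Finset.sum_congr rfl fun i _ => by rw [mul_smul_comm]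
    _ = F.p (t * g) j * a * (F.q (t * g) j * x) := by rw [← hc']
    _ = F.p (t * g) j * a * F.q (t * g) j * x := by simp [mul_assoc]

lemma psiG_add (g : G) (a b : K) : F.PsiG g (a + b) = F.PsiG g a + F.PsiG g b := by
  unfold PsiG
  rw [← Finset.sum_add_distrib]
  exact Finset.sum_congr rfl fun i _ => by rw [mul_add, add_mul]

/-- `Ψ_1 = Ψ_h` on `K_h`, via strong grading. -/
lemma psiG_one_eq (h : G) (c : K) (hc : c ∈ F.Kg h)
    (hstrong : F.Kg h * F.Kg h⁻¹ = F.Kg 1) :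
    F.PsiG 1 c = F.PsiG h c := by
  have hone : (1 : K) ∈ F.Kg h * F.Kg h⁻¹ := by rw [hstrong]; exact F.one_mem
  have main : ∀ u ∈ F.Kg h * F.Kg h⁻¹, F.PsiG 1 (u * c) = F.PsiG h (u * c) := by
    intro u hu
    refine Submodule.mul_induction_on hu ?_ ?_
    · intro m hm n hn
      have h1 : F.PsiG 1 (m * (n * c)) = F.PsiG (1 * h) ((n * c) * m) :=
        F.psiG_cyclic 1 h m (n * c) hm
      have hnc : n * c ∈ F.Kg 1 := by
        have := F.mul_mem hn hc
        rwa [inv_mul_cancel] at this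
      have h2 : F.PsiG h ((n * c) * m) = F.PsiG (h * 1) (m * (n * c)) :=
        F.psiG_cyclic h 1 (n * c) m hnc
      rw [mul_assoc, h1, one_mul, h2, mul_one, ← mul_assoc]
    · intro x y hx hy
      rw [add_mul, F.psiG_add, F.psiG_add, hx, hy]
  have := main 1 hone
  rwa [one_mul] at this

end FrobeniusGAlgebraData

/-- `φ_h` acts as the identity on `Ψ(K_h)`. -/
theorem quasiBiangular_phi_fixes_degree
    (F : FrobeniusGAlgebraData k G K)
    (z : K) (hz : z ∈ F.Kg 1)
    (hzcentral : ∀ a ∈ F.Kg 1, z * a = a * z)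
    (hbiang : ∀ g : G, ∑ i, F.p g i * z * F.q g i = 1)
    (hstrong : ∀ g h : G, F.Kg g * F.Kg h = F.Kg (g * h))
    (h : G) :
    ∀ c ∈ F.Kg h, F.phi z h (F.Psi c) = F.Psi c := by
  intro c hc
  have step1 : ∀ i, F.p h i * F.PsiG 1 c = F.PsiG h c * F.p h i := by
    intro i
    have := F.psiG_swap 1 h (F.p h i) c (F.p_mem h i)
    rwa [mul_one] at this
  have key : F.phi z h (F.Psi c) = F.PsiG h c * ∑ i, F.p h i * z * F.q h i := by
    unfold FrobeniusGAlgebraData.phi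
    rw [Finset.mul_sum]
    apply Finset.sum_congr rfl
    intro i _
    rw [F.psi_eq_psiG]
    calc F.p h i * F.PsiG 1 c * z * F.q h i
        = F.PsiG h c * F.p h i * z * F.q h i := by rw [step1 i]
      _ = F.PsiG h c * (F.p h i * z * F.q h i) := by simp [mul_assoc]
  have hstrong' : F.Kg h * F.Kg h⁻¹ = F.Kg 1 := by
    rw [hstrong h h⁻¹, mul_inv_cancel]
  rw [key, hbiang h, mul_one, F.psi_eq_psiG, F.psiG_one_eq h c hc hstrong']
end

section
/- Let (K, η) be a quasi-biangular G-algebra with central element z and maps φ_g(a) = Σ_i p_i^g a z q_i^g, Ψ(a) = Σ_i p_i^e a q_i^e. Then φ_g restricted to the G-center is multiplicative: for all a, b ∈ K and g ∈ G, φ_g(Ψ(a) · Ψ(b)) = φ_g(Ψ(a)) · φ_g(Ψ(b)), where x · y = x Ψ(y) z⁻¹ is the multiplication of the G-center Z_G(K) (with Σ_k p_k^g q_k^g = z⁻¹ for every g). -/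
open scoped TensorProduct

variable {k G K : Type*} [CommRing k] [Group G] [DecidableEq G] [Ring K] [Algebra k K]

namespace FrobeniusGAlgebraData

variable (F : FrobeniusGAlgebraData k G K)

/-- dual characterization: expansion in the `q` basis. -/
lemma dual_char_s8 (g : G) (b : K) (hb : b ∈ F.Kg g⁻¹) :
    b = ∑ i, F.form b (F.p g i) • F.q g i := by
  have hmem : b - ∑ i, F.form b (F.p g i) • F.q g i ∈ F.Kg g⁻¹ :=
    Submodule.sub_mem _ hb (Submodule.sum_mem _ fun i _ =>
      Submodule.smul_mem _ _ (F.q_mem g i))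
  have h0 : ∀ c ∈ F.Kg (g⁻¹)⁻¹, F.form (b - ∑ i, F.form b (F.p g i) • F.q g i) c = 0 := by
    intro c hc
    rw [inv_inv] at hc
    have hchar := F.char g c hc
    have h1 : F.form b c = ∑ i, F.form c (F.q g i) * F.form b (F.p g i) := by
      conv_lhs => rw [F.form_symm b c, hchar]
      simp [map_sum, LinearMap.sum_apply, LinearMap.smul_apply, map_smul, smul_eq_mul,
        F.form_symm]
    have h2 : F.form (∑ i, F.form b (F.p g i) • F.q g i) c
        = ∑ i, F.form b (F.p g i) * F.form (F.q g i) c := by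
      simp [map_sum, LinearMap.sum_apply, LinearMap.smul_apply, map_smul, smul_eq_mul]
    rw [map_sub, LinearMap.sub_apply, h1, h2, sub_eq_zero]
    exact Finset.sum_congr rfl fun i _ => by rw [F.form_symm (F.q g i) c, mul_comm]
  exact sub_eq_zero.mp (F.form_nondeg g⁻¹ _ hmem h0)

/-- The Casimir "slide" lemma: a homogeneous element can be moved across the
inner product element, shifting the degree. -/
lemma slide {h : G} {x : K} (hx : x ∈ F.Kg h) (g : G) (c : K) :
    ∑ i, x * F.p g i * c * F.q g i
      = ∑ j, F.p (h * g) j * c * (F.q (h * g) j * x) := by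
  have hxp : ∀ i, x * F.p g i ∈ F.Kg (h * g) := fun i => F.mul_mem hx (F.p_mem g i)
  have hqx : ∀ j, F.q (h * g) j * x ∈ F.Kg g⁻¹ := by
    intro j
    have e1 : (h * g)⁻¹ * h = g⁻¹ := by group
    have := F.mul_mem (F.q_mem (h * g) j) hx
    rwa [e1] at this
  calc ∑ i, x * F.p g i * c * F.q g i
      = ∑ i, (∑ j, F.form (x * F.p g i) (F.q (h*g) j) • F.p (h*g) j) * c * F.q g i := by
        refine Finset.sum_congr rfl fun i _ => ?_
        rw [← F.char (h*g) _ (hxp i)]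
    _ = ∑ i, ∑ j, F.form (x * F.p g i) (F.q (h*g) j) • (F.p (h*g) j * c * F.q g i) := by
        simp [Finset.sum_mul, smul_mul_assoc]
    _ = ∑ j, ∑ i, F.form (F.q (h*g) j * x) (F.p g i) • (F.p (h*g) j * c * F.q g i) := by
        rw [Finset.sum_comm]
        refine Finset.sum_congr rfl fun j _ => Finset.sum_congr rfl fun i _ => ?_
        rw [F.form_frob (F.q (h*g) j) x (F.p g i),
          F.form_symm (F.q (h*g) j) (x * F.p g i)]
    _ = ∑ j, F.p (h*g) j * c * (∑ i, F.form (F.q (h*g) j * x) (F.p g i) • F.q g i) := by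
        simp [Finset.mul_sum, mul_smul_comm]
    _ = ∑ j, F.p (h*g) j * c * (F.q (h*g) j * x) := by
        refine Finset.sum_congr rfl fun j _ => ?_
        rw [← F.dual_char_s8 g _ (hqx j)]

/-- `slide` with the target degree given explicitly, to avoid dependent rewrites. -/
lemma slide' {h : G} {x : K} (hx : x ∈ F.Kg h) (g : G) (c : K) {hg : G} (e : h * g = hg) :
    ∑ i, x * F.p g i * c * F.q g i = ∑ j, F.p hg j * c * (F.q hg j * x) := by
  subst e; exact F.slide hx g c

end FrobeniusGAlgebraData

/-- `φ_g` is multiplicative for the G-center product `x · y = x Ψ(y) z⁻¹`. -/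
theorem quasiBiangular_phi_multiplicative
    (F : FrobeniusGAlgebraData k G K)
    (z : K) (hz : z ∈ F.Kg 1)
    (hzcentral : ∀ a ∈ F.Kg 1, z * a = a * z)
    (hbiang : ∀ g : G, ∑ i, F.p g i * z * F.q g i = 1)
    (hstrong : ∀ g h : G, F.Kg g * F.Kg h = F.Kg (g * h))
    (zinv : K) (hzinv_l : z * zinv = 1) (hzinv_r : zinv * z = 1)
    (hzinv_eq : ∀ g : G, ∑ i, F.p g i * F.q g i = zinv)
    (a b : K) (g : G) :
    F.phi z g (F.Psi a * F.Psi (F.Psi b) * zinv)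
      = F.phi z g (F.Psi a) * F.Psi (F.phi z g (F.Psi b)) * zinv := by
  have hzz : ∀ t : K, zinv * (z * t) = t := fun t => by rw [← mul_assoc, hzinv_r, one_mul]
  have hzz' : ∀ t : K, z * (zinv * t) = t := fun t => by rw [← mul_assoc, hzinv_l, one_mul]
  have mswap : ∀ {u v : K}, u * v = v * u → ∀ t : K, u * (v * t) = v * (u * t) :=
    fun huv t => by rw [← mul_assoc, huv, mul_assoc]
  -- elements of `K_1` commute with `∑ p_j^g m q_j^g`
  have Kcomm : ∀ c ∈ F.Kg 1, ∀ (g' : G) (m : K),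
      c * ∑ j, F.p g' j * m * F.q g' j = (∑ j, F.p g' j * m * F.q g' j) * c := by
    intro c hc g' m
    have hs := F.slide' hc g' m (one_mul g')
    calc c * ∑ j, F.p g' j * m * F.q g' j = ∑ j, c * F.p g' j * m * F.q g' j := by
          rw [Finset.mul_sum]; exact Finset.sum_congr rfl fun j _ => by simp only [mul_assoc]
      _ = ∑ j, F.p g' j * m * (F.q g' j * c) := hs
      _ = (∑ j, F.p g' j * m * F.q g' j) * c := by
          rw [Finset.sum_mul]; exact Finset.sum_congr rfl fun j _ => by simp only [mul_assoc]
  have PsiComm : ∀ c ∈ F.Kg 1, ∀ x : K, c * F.Psi x = F.Psi x * c :=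
    fun c hc x => Kcomm c hc 1 x
  -- `zinv` commutes with all the `q_j^{g'}`
  have comm_q : ∀ (g' : G) (j : Fin (F.n g')), F.q g' j * zinv = zinv * F.q g' j := by
    intro g' j
    have hs := F.slide' (F.q_mem g' j) 1 (1 : K) (mul_one g'⁻¹)
    simp only [mul_one] at hs
    calc F.q g' j * zinv = F.q g' j * ∑ m', F.p 1 m' * F.q 1 m' := by rw [hzinv_eq 1]
      _ = ∑ m', F.q g' j * F.p 1 m' * F.q 1 m' := by
          rw [Finset.mul_sum]; exact Finset.sum_congr rfl fun m' _ => by simp only [mul_assoc]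
      _ = ∑ m', F.p g'⁻¹ m' * (F.q g'⁻¹ m' * F.q g' j) := hs
      _ = (∑ m', F.p g'⁻¹ m' * F.q g'⁻¹ m') * F.q g' j := by
          rw [Finset.sum_mul]; exact Finset.sum_congr rfl fun m' _ => by simp only [mul_assoc]
      _ = zinv * F.q g' j := by rw [hzinv_eq g'⁻¹]
  have hpB : ∀ m : Fin (F.n 1), F.p 1 m * F.Psi b = F.Psi b * F.p 1 m :=
    fun m => PsiComm _ (F.p_mem 1 m) b
  have hzB : z * F.Psi b = F.Psi b * z := PsiComm z hz b
  -- `Ψ(x) = x * zinv` for `x` commuting with the `p_i^1`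
  have PsiOfComm : ∀ x : K, (∀ m : Fin (F.n 1), F.p 1 m * x = x * F.p 1 m) →
      F.Psi x = x * zinv := by
    intro x hx
    calc F.Psi x = ∑ m, F.p 1 m * x * F.q 1 m := rfl
      _ = ∑ m, x * (F.p 1 m * F.q 1 m) := by
          refine Finset.sum_congr rfl fun m _ => ?_
          rw [hx m, mul_assoc]
      _ = x * ∑ m, F.p 1 m * F.q 1 m := by rw [Finset.mul_sum]
      _ = x * zinv := by rw [hzinv_eq 1]
  have hPsiPsiB : F.Psi (F.Psi b) = F.Psi b * zinv :=
    PsiOfComm (F.Psi b) fun m => PsiComm _ (F.p_mem 1 m) b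
  have hphiB : F.phi z g (F.Psi b) = ∑ j, F.p g j * (F.Psi b * z) * F.q g j := by
    show ∑ j, F.p g j * F.Psi b * z * F.q g j = _
    exact Finset.sum_congr rfl fun j _ => by rw [mul_assoc (F.p g j) (F.Psi b) z]
  have hphiB_comm : ∀ m : Fin (F.n 1),
      F.p 1 m * F.phi z g (F.Psi b) = F.phi z g (F.Psi b) * F.p 1 m := by
    intro m; rw [hphiB]; exact Kcomm _ (F.p_mem 1 m) g (F.Psi b * z)
  have hPsiphiB : F.Psi (F.phi z g (F.Psi b)) = F.phi z g (F.Psi b) * zinv :=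
    PsiOfComm _ hphiB_comm
  -- the key inner computation
  have hmain : ∀ i : Fin (F.n g),
      F.q g i * ((∑ j, F.p g j * (F.Psi b * (z * F.q g j))) * (zinv * zinv))
        = F.Psi b * (zinv * (zinv * F.q g i)) := by
    intro i
    calc F.q g i * ((∑ j, F.p g j * (F.Psi b * (z * F.q g j))) * (zinv * zinv))
        = ∑ j, F.q g i * F.p g j * (F.Psi b * zinv) * F.q g j := by
          rw [Finset.sum_mul, Finset.mul_sum]
          refine Finset.sum_congr rfl fun j _ => ?_
          simp only [mul_assoc]
          rw [mswap (comm_q g j) zinv, comm_q g j, hzz' (zinv * F.q g j)]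
      _ = ∑ m, F.p 1 m * (F.Psi b * zinv) * (F.q 1 m * F.q g i) := by
          exact F.slide' (F.q_mem g i) g (F.Psi b * zinv) (inv_mul_cancel g)
      _ = ∑ m, F.Psi b * (F.p 1 m * (F.q 1 m * (zinv * F.q g i))) := by
          refine Finset.sum_congr rfl fun m _ => ?_
          simp only [mul_assoc]
          rw [mswap (hpB m), mswap (comm_q 1 m).symm (F.q g i)]
      _ = F.Psi b * ((∑ m, F.p 1 m * F.q 1 m) * (zinv * F.q g i)) := by
          rw [Finset.sum_mul, Finset.mul_sum]
          exact Finset.sum_congr rfl fun m _ => by rw [mul_assoc]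
      _ = F.Psi b * (zinv * (zinv * F.q g i)) := by rw [hzinv_eq 1]
  rw [hPsiPsiB, hPsiphiB]
  simp only [FrobeniusGAlgebraData.phi]
  have hL : ∑ i, F.p g i * (F.Psi a * (F.Psi b * zinv) * zinv) * z * F.q g i
      = ∑ i, F.p g i * (F.Psi a * (F.Psi b * (zinv * F.q g i))) := by
    refine Finset.sum_congr rfl fun i _ => ?_
    simp only [mul_assoc]
    rw [hzz (F.q g i)]
  have hR : (∑ i, F.p g i * F.Psi a * z * F.q g i)
        * ((∑ i, F.p g i * F.Psi b * z * F.q g i) * zinv) * zinv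
      = ∑ i, F.p g i * (F.Psi a * (F.Psi b * (zinv * F.q g i))) := by
    rw [Finset.sum_mul, Finset.sum_mul]
    refine Finset.sum_congr rfl fun i _ => ?_
    calc F.p g i * F.Psi a * z * F.q g i
          * ((∑ j, F.p g j * F.Psi b * z * F.q g j) * zinv) * zinv
        = F.p g i * (F.Psi a * (z * (F.q g i
            * ((∑ j, F.p g j * (F.Psi b * (z * F.q g j))) * (zinv * zinv))))) := by
          simp only [mul_assoc]
      _ = F.p g i * (F.Psi a * (z * (F.Psi b * (zinv * (zinv * F.q g i))))) := by
          rw [hmain i]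
      _ = F.p g i * (F.Psi a * (F.Psi b * (zinv * F.q g i))) := by
          rw [mswap hzB (zinv * (zinv * F.q g i)), hzz' (zinv * F.q g i)]
  exact hL.trans hR.symm
end
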